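/- A spray Gⁱ on U is isotropic if and only if its curvature tensor has the isotropic form: there exist smooth functions λ and ηⱼ on U × (ℝⁿ∖{0}) with Rⁱⱼ = λ δⁱⱼ + ηⱼ yⁱ (Jacobi endomorphism Φ = λJ + η⊗C) if and only if there exist smooth functions αⱼ and βⱼₖ = −βₖⱼ on U × (ℝⁿ∖{0}) with Rⁱⱼₖ = αⱼ δⁱₖ − αₖ δⁱⱼ + βⱼₖ yⁱ (curvature R = α∧J + β⊗C). -/

import Mathlib

namespace PM

abbrev E (n : ℕ) := (Fin n → ℝ) × (Fin n → ℝ)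

noncomputable def pdx {n : ℕ} (i : Fin n) (f : E n → ℝ) (z : E n) : ℝ :=
  fderiv ℝ f z (Pi.single i 1, 0)

noncomputable def pdy {n : ℕ} (i : Fin n) (f : E n → ℝ) (z : E n) : ℝ :=
  fderiv ℝ f z (0, Pi.single i 1)

def Dom {n : ℕ} (U : Set (Fin n → ℝ)) : Set (E n) := U ×ˢ {y : Fin n → ℝ | y ≠ 0}

/-- A spray in local coordinates: an `n`-tuple of smooth functions on
`U × (ℝⁿ∖{0})`, positively `2`-homogeneous in `y`. -/
def IsSpray {n : ℕ} (U : Set (Fin n → ℝ)) (G : Fin n → E n → ℝ) : Prop :=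
  (∀ i, ContDiffOn ℝ (⊤ : ℕ∞) (G i) (Dom U)) ∧
  ∀ i, ∀ x ∈ U, ∀ y : Fin n → ℝ, y ≠ 0 → ∀ L : ℝ, 0 < L →
    G i (x, L • y) = L ^ 2 * G i (x, y)

/-- Nonlinear connection `Nⁱⱼ = ∂Gⁱ/∂yʲ`. -/
noncomputable def Nc {n : ℕ} (G : Fin n → E n → ℝ) (i j : Fin n) (z : E n) : ℝ :=
  pdy j (G i) z

/-- Horizontal derivative `δf/δxʲ = ∂f/∂xʲ − Nᵏⱼ ∂f/∂yᵏ`. -/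
noncomputable def delx {n : ℕ} (G : Fin n → E n → ℝ) (j : Fin n) (f : E n → ℝ) (z : E n) : ℝ :=
  pdx j f z - ∑ k, Nc G k j z * pdy k f z

/-- Spray derivative `S(f) = yᵏ ∂f/∂xᵏ − 2Gᵏ ∂f/∂yᵏ`. -/
noncomputable def Sder {n : ℕ} (G : Fin n → E n → ℝ) (f : E n → ℝ) (z : E n) : ℝ :=
  (∑ k, z.2 k * pdx k f z) - 2 * ∑ k, G k z * pdy k f z

/-- Curvature tensor `Rⁱⱼₖ = δNⁱⱼ/δxᵏ − δNⁱₖ/δxʲ`. -/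
noncomputable def Rcurv {n : ℕ} (G : Fin n → E n → ℝ) (i j k : Fin n) (z : E n) : ℝ :=
  delx G k (Nc G i j) z - delx G j (Nc G i k) z

/-- Jacobi endomorphism `Rⁱⱼ = 2 δGⁱ/δxʲ − S(Nⁱⱼ) + Nⁱₖ Nᵏⱼ`. -/
noncomputable def RJac {n : ℕ} (G : Fin n → E n → ℝ) (i j : Fin n) (z : E n) : ℝ :=
  2 * delx G j (G i) z - Sder G (Nc G i j) z + ∑ k, Nc G i k z * Nc G k j z

noncomputable def sq {n : ℕ} (F : E n → ℝ) : E n → ℝ := fun w => F w ^ 2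

/-- The `2n×2n` matrix of `dθ` for a semi-basic 1-form `θ`. -/
noncomputable def dthetaMat {n : ℕ} (θ : Fin n → E n → ℝ) (z : E n) :
    Matrix (Fin n ⊕ Fin n) (Fin n ⊕ Fin n) ℝ :=
  Matrix.fromBlocks
    (Matrix.of fun i j => pdx i (θ j) z - pdx j (θ i) z)
    (Matrix.of fun i j => -(pdy j (θ i) z))
    (Matrix.of fun i j => pdy i (θ j) z)
    0

/-- Finsler function in local coordinates. -/
def IsFinsler {n : ℕ} (U : Set (Fin n → ℝ)) (F : E n → ℝ) : Prop :=
  ContinuousOn F (U ×ˢ (Set.univ : Set (Fin n → ℝ))) ∧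
  ContDiffOn ℝ (⊤ : ℕ∞) F (Dom U) ∧
  (∀ z ∈ Dom U, 0 < F z) ∧
  (∀ x ∈ U, F (x, 0) = 0) ∧
  (∀ x ∈ U, ∀ y : Fin n → ℝ, ∀ L : ℝ, 0 < L → F (x, L • y) = L * F (x, y)) ∧
  (∀ z ∈ Dom U,
    (Matrix.of (fun i j : Fin n => (1 / 2 : ℝ) * pdy i (pdy j (sq F)) z)).rank = n)

/-- Geodesic coefficients of a Finsler function:
`yᵏ ∂²F²/∂xᵏ∂yⁱ − 2G_Fᵏ ∂²F²/∂yᵏ∂yⁱ = ∂F²/∂xⁱ`. -/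
def IsGeodesicCoeffs {n : ℕ} (U : Set (Fin n → ℝ)) (F : E n → ℝ)
    (GF : Fin n → E n → ℝ) : Prop :=
  (∀ i, ContDiffOn ℝ (⊤ : ℕ∞) (GF i) (Dom U)) ∧
  ∀ z ∈ Dom U, ∀ i : Fin n,
    (∑ k, z.2 k * pdx k (pdy i (sq F)) z)
      - 2 * ∑ k, GF k z * pdy k (pdy i (sq F)) z = pdx i (sq F) z

/-- Positively 1-homogeneous in `y`. -/
def PosHomog1 {n : ℕ} (U : Set (Fin n → ℝ)) (P : E n → ℝ) : Prop :=
  ∀ x ∈ U, ∀ y : Fin n → ℝ, y ≠ 0 → ∀ L : ℝ, 0 < L → P (x, L • y) = L * P (x, y)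

/-- A spray is projectively metrizable if `Gⁱ = G_Fⁱ + P yⁱ` for a Finsler
function `F` with geodesic coefficients `G_Fⁱ` and a smooth positively
1-homogeneous `P`. -/
def ProjectivelyMetrizable {n : ℕ} (U : Set (Fin n → ℝ)) (G : Fin n → E n → ℝ) : Prop :=
  ∃ (F : E n → ℝ) (GF : Fin n → E n → ℝ) (P : E n → ℝ),
    IsFinsler U F ∧ IsGeodesicCoeffs U F GF ∧
    ContDiffOn ℝ (⊤ : ℕ∞) P (Dom U) ∧ PosHomog1 U P ∧
    ∀ z ∈ Dom U, ∀ i, G i z = GF i z + P z * z.2 i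

/- ===== auxiliary infrastructure ===== -/
section Aux

variable {n : ℕ} {U : Set (Fin n → ℝ)}

lemma isOpen_Dom (hU : IsOpen U) : IsOpen (Dom U) := hU.prod isOpen_ne

lemma mem_nhds_Dom (hU : IsOpen U) {z : E n} (hz : z ∈ Dom U) : Dom U ∈ nhds z :=
  (isOpen_Dom hU).mem_nhds hz

lemma pdv_congr {f g : E n → ℝ} {z : E n} (v : E n) (h : f =ᶠ[nhds z] g) :
    fderiv ℝ f z v = fderiv ℝ g z v := by rw [h.fderiv_eq]

lemma pdv_sub {f g : E n → ℝ} {z : E n} (v : E n) (hf : DifferentiableAt ℝ f z)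
    (hg : DifferentiableAt ℝ g z) :
    fderiv ℝ (fun w => f w - g w) z v = fderiv ℝ f z v - fderiv ℝ g z v := by
  rw [fderiv_fun_sub hf hg]; rfl

lemma pdv_add {f g : E n → ℝ} {z : E n} (v : E n) (hf : DifferentiableAt ℝ f z)
    (hg : DifferentiableAt ℝ g z) :
    fderiv ℝ (fun w => f w + g w) z v = fderiv ℝ f z v + fderiv ℝ g z v := by
  rw [fderiv_fun_add hf hg]; rfl

lemma pdv_mul {f g : E n → ℝ} {z : E n} (v : E n) (hf : DifferentiableAt ℝ f z)
    (hg : DifferentiableAt ℝ g z) :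
    fderiv ℝ (fun w => f w * g w) z v = f z * fderiv ℝ g z v + g z * fderiv ℝ f z v := by
  rw [fderiv_fun_mul hf hg]; simp [smul_eq_mul]

lemma pdv_const_mul {f : E n → ℝ} {z : E n} (v : E n) (c : ℝ) (hf : DifferentiableAt ℝ f z) :
    fderiv ℝ (fun w => c * f w) z v = c * fderiv ℝ f z v := by
  rw [fderiv_const_mul hf c]; simp [smul_eq_mul]

lemma pdv_sum {ι : Type*} {s : Finset ι} {A : ι → E n → ℝ} {z : E n} (v : E n)
    (h : ∀ i ∈ s, DifferentiableAt ℝ (A i) z) :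
    fderiv ℝ (fun w => ∑ i ∈ s, A i w) z v = ∑ i ∈ s, fderiv ℝ (A i) z v := by
  rw [fderiv_fun_sum h]; simp

lemma ycoord_contDiff (k : Fin n) : ContDiff ℝ (⊤ : ℕ∞) (fun w : E n => w.2 k) :=
  (contDiff_apply (𝕜 := ℝ) (E := ℝ) k).comp contDiff_snd

lemma pdv_ycoord (k : Fin n) (z v : E n) :
    fderiv ℝ (fun w : E n => w.2 k) z v = v.2 k := by
  have h : (fun w : E n => w.2 k) =
      ((ContinuousLinearMap.proj k).comp (ContinuousLinearMap.snd ℝ (Fin n → ℝ) (Fin n → ℝ))) := rfl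
  rw [h, ContinuousLinearMap.fderiv]; rfl

lemma diffAt_of_cd {f : E n → ℝ} (hU : IsOpen U) (hf : ContDiffOn ℝ (⊤ : ℕ∞) f (Dom U))
    {z : E n} (hz : z ∈ Dom U) : DifferentiableAt ℝ f z :=
  (hf.contDiffAt (mem_nhds_Dom hU hz)).differentiableAt (by simp)

lemma cd_pdv {f : E n → ℝ} (hU : IsOpen U) (hf : ContDiffOn ℝ (⊤ : ℕ∞) f (Dom U)) (v : E n) :
    ContDiffOn ℝ (⊤ : ℕ∞) (fun z => fderiv ℝ f z v) (Dom U) :=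
  (hf.fderiv_of_isOpen (isOpen_Dom hU) (by simp)).clm_apply contDiffOn_const

lemma pdv_pdv {f : E n → ℝ} {z : E n} (hf : ContDiffAt ℝ (⊤ : ℕ∞) f z) (u v : E n) :
    fderiv ℝ (fun w => fderiv ℝ f w u) z v = fderiv ℝ (fderiv ℝ f) z v u := by
  have h1 : ContDiffAt ℝ (⊤ : ℕ∞) (fderiv ℝ f) z := hf.fderiv_right (by simp)
  have h2 : DifferentiableAt ℝ (fderiv ℝ f) z := h1.differentiableAt (by simp)
  have h3 := ((ContinuousLinearMap.apply ℝ ℝ u).hasFDerivAt.comp z h2.hasFDerivAt).fderiv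
  have h4 : (fun w => fderiv ℝ f w u) =
      ⇑(ContinuousLinearMap.apply ℝ ℝ u) ∘ fderiv ℝ f := rfl
  rw [h4, h3]; rfl

lemma pdv_swap {f : E n → ℝ} {z : E n} (hf : ContDiffAt ℝ (⊤ : ℕ∞) f z) (u v : E n) :
    fderiv ℝ (fun w => fderiv ℝ f w u) z v = fderiv ℝ (fun w => fderiv ℝ f w v) z u := by
  rw [pdv_pdv hf u v, pdv_pdv hf v u]
  exact (hf.isSymmSndFDerivAt (by rw [minSmoothness_of_isRCLikeNormedField]; exact WithTop.coe_le_coe.mpr le_top)) v u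

/-- positively `p`-homogeneous in `y` on `Dom U` -/
def Homog (U : Set (Fin n → ℝ)) (p : ℕ) (f : E n → ℝ) : Prop :=
  ∀ w ∈ Dom U, ∀ L : ℝ, 0 < L → f (w.1, L • w.2) = L ^ p * f w

lemma smul_mem_Dom {z : E n} (hz : z ∈ Dom U) {L : ℝ} (hL : 0 < L) :
    (z.1, L • z.2) ∈ Dom U := by
  obtain ⟨h1, h2⟩ := hz
  exact ⟨h1, smul_ne_zero (ne_of_gt hL) h2⟩

lemma decomp_y (y : Fin n → ℝ) :
    ((0, y) : E n) = ∑ k, y k • ((0, Pi.single k 1) : E n) := by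
  ext j
  · simp [Prod.fst_sum]
  · simp [Prod.snd_sum, Pi.single_apply, mul_comm]

/-- Euler's theorem -/
lemma euler {f : E n → ℝ} {p : ℕ} (hU : IsOpen U)
    (hhom : Homog U p f) {z : E n} (hz : z ∈ Dom U)
    (hf : DifferentiableAt ℝ f z) :
    ∑ k, z.2 k * pdy k f z = (p : ℝ) * f z := by
  have hγ : HasDerivAt (fun L : ℝ => ((z.1, L • z.2) : E n)) ((0, z.2) : E n) 1 := by
    have h1 : HasDerivAt (fun L : ℝ => L • z.2) ((1:ℝ) • z.2) 1 :=
      (hasDerivAt_id 1).smul_const z.2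
    rw [one_smul] at h1
    exact (hasDerivAt_const (x := (1:ℝ)) (c := z.1)).prodMk h1
  have hfz : HasFDerivAt f (fderiv ℝ f z) ((z.1, (1:ℝ) • z.2)) := by
    rw [one_smul]; exact hf.hasFDerivAt
  have hd : HasDerivAt (fun L : ℝ => f (z.1, L • z.2)) (fderiv ℝ f z (0, z.2)) 1 :=
    hfz.comp_hasDerivAt 1 hγ
  have he : (fun L : ℝ => f (z.1, L • z.2)) =ᶠ[nhds 1] fun L => L ^ p * f z := by
    filter_upwards [eventually_gt_nhds zero_lt_one] with L hL
    exact hhom z hz L hL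
  have hd2 : HasDerivAt (fun L : ℝ => L ^ p * f z) (fderiv ℝ f z (0, z.2)) 1 :=
    hd.congr_of_eventuallyEq he.symm
  have hd3 : HasDerivAt (fun L : ℝ => L ^ p * f z) ((p : ℝ) * 1 ^ (p - 1) * f z) 1 :=
    (hasDerivAt_pow p 1).mul_const (f z)
  have key : fderiv ℝ f z (0, z.2) = (p : ℝ) * f z := by
    have := hd2.unique hd3
    simpa using this
  rw [← key, decomp_y z.2, map_sum]
  refine Finset.sum_congr rfl fun x _ => ?_
  rw [ContinuousLinearMap.map_smul, smul_eq_mul]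
  rfl

/-- scaling map as CLM -/
noncomputable def scl (L : ℝ) : E n →L[ℝ] E n :=
  (ContinuousLinearMap.id ℝ (Fin n → ℝ)).prodMap (L • ContinuousLinearMap.id ℝ (Fin n → ℝ))

lemma scl_apply (L : ℝ) (w : E n) : scl (n := n) L w = (w.1, L • w.2) := rfl

lemma homog_fderiv {f : E n → ℝ} {p : ℕ} (hU : IsOpen U)
    (hf : ContDiffOn ℝ (⊤ : ℕ∞) f (Dom U)) (hhom : Homog U p f)
    {z : E n} (hz : z ∈ Dom U) {L : ℝ} (hL : 0 < L) (v : E n) :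
    fderiv ℝ f (z.1, L • z.2) (v.1, L • v.2) = L ^ p * fderiv ℝ f z v := by
  have hzL : ((z.1, L • z.2) : E n) ∈ Dom U := smul_mem_Dom hz hL
  have hdf : DifferentiableAt ℝ f z :=
    (hf.contDiffAt (mem_nhds_Dom hU hz)).differentiableAt (by simp)
  have hdfL : DifferentiableAt ℝ f (z.1, L • z.2) :=
    (hf.contDiffAt (mem_nhds_Dom hU hzL)).differentiableAt (by simp)
  have hcomp : HasFDerivAt (fun w : E n => f (scl L w))
      ((fderiv ℝ f (z.1, L • z.2)).comp (scl L)) z := by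
    have := hdfL.hasFDerivAt.comp z (scl (n := n) L).hasFDerivAt
    exact this
  have he : (fun w : E n => f (scl L w)) =ᶠ[nhds z] fun w => L ^ p * f w := by
    filter_upwards [mem_nhds_Dom hU hz] with w hw
    exact hhom w hw L hL
  have h2 : fderiv ℝ (fun w => L ^ p * f w) z
      = ((L ^ p : ℝ) • fderiv ℝ f z : E n →L[ℝ] ℝ) :=
    fderiv_const_mul hdf (L ^ p)
  have h1 : fderiv ℝ (fun w : E n => f (scl L w)) z =
      (fderiv ℝ f (z.1, L • z.2)).comp (scl L) := hcomp.fderiv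
  have h5 : fderiv ℝ (fun w : E n => f (scl L w)) z
      = fderiv ℝ (fun w => L ^ p * f w) z := he.fderiv_eq
  rw [h1, h2] at h5
  have h6 := congrArg (fun A : E n →L[ℝ] ℝ => A v) h5
  simpa [scl_apply, smul_eq_mul] using h6

lemma homog_pdx {f : E n → ℝ} {p : ℕ} (hU : IsOpen U)
    (hf : ContDiffOn ℝ (⊤ : ℕ∞) f (Dom U)) (hhom : Homog U p f) (j : Fin n) :
    Homog U p (pdx j f) := by
  intro z hz L hL
  have := homog_fderiv hU hf hhom hz hL ((Pi.single j 1, 0) : E n)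
  simpa [pdx, smul_zero] using this

lemma homog_pdy {f : E n → ℝ} {p : ℕ} (hU : IsOpen U)
    (hf : ContDiffOn ℝ (⊤ : ℕ∞) f (Dom U)) (hhom : Homog U (p + 1) f) (j : Fin n) :
    Homog U p (pdy j f) := by
  intro z hz L hL
  have h0 := homog_fderiv hU hf hhom hz hL ((0, Pi.single j 1) : E n)
  have hv : ((0, L • (Pi.single j 1 : Fin n → ℝ)) : E n)
      = L • ((0, Pi.single j 1) : E n) := by
    rw [Prod.smul_mk, smul_zero]
  have h2 : L * pdy j f (z.1, L • z.2) = L ^ (p + 1) * pdy j f z := by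
    simp only [pdy]
    rw [← h0]
    simp only [hv, ContinuousLinearMap.map_smul, smul_eq_mul]
  have hL0 : L ≠ 0 := ne_of_gt hL
  have h3 : L * pdy j f (z.1, L • z.2) = L * (L ^ p * pdy j f z) := by
    rw [h2]; ring
  exact mul_left_cancel₀ hL0 h3

end Aux
section Spray
variable {n : ℕ} {U : Set (Fin n → ℝ)} {G : Fin n → E n → ℝ}

lemma homogG (hG : IsSpray U G) (i : Fin n) : Homog U 2 (G i) := by
  intro w hw L hL
  exact hG.2 i w.1 hw.1 w.2 hw.2 L hL

lemma cdN (hU : IsOpen U) (hG : IsSpray U G) (i j : Fin n) :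
    ContDiffOn ℝ (⊤ : ℕ∞) (Nc G i j) (Dom U) :=
  cd_pdv hU (hG.1 i) ((0, Pi.single j 1) : E n)

lemma homogN (hU : IsOpen U) (hG : IsSpray U G) (i j : Fin n) :
    Homog U 1 (Nc G i j) :=
  homog_pdy (p := 1) hU (hG.1 i) (homogG hG i) j

lemma diffN (hU : IsOpen U) (hG : IsSpray U G) (i j : Fin n) {z : E n} (hz : z ∈ Dom U) :
    DifferentiableAt ℝ (Nc G i j) z :=
  diffAt_of_cd hU (cdN hU hG i j) hz

lemma eulerG (hU : IsOpen U) (hG : IsSpray U G) (i : Fin n) {z : E n} (hz : z ∈ Dom U) :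
    ∑ k, z.2 k * Nc G i k z = 2 * G i z := by
  have h := euler hU (homogG hG i) hz (diffAt_of_cd hU (hG.1 i) hz)
  norm_num at h
  exact h

lemma contract_deriv (hU : IsOpen U) (hG : IsSpray U G) (i : Fin n) {z : E n}
    (hz : z ∈ Dom U) (v : E n) :
    ∑ k, (v.2 k * Nc G i k z + z.2 k * fderiv ℝ (Nc G i k) z v)
      = 2 * fderiv ℝ (G i) z v := by
  have hfun : Set.EqOn (fun w => ∑ k, w.2 k * Nc G i k w) (fun w => 2 * G i w) (Dom U) :=
    fun w hw => eulerG hU hG i hw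
  have hev : (fun w => ∑ k, w.2 k * Nc G i k w) =ᶠ[nhds z] (fun w => 2 * G i w) :=
    Filter.eventuallyEq_of_mem (mem_nhds_Dom hU hz) hfun
  have h1 := pdv_congr v hev
  rw [pdv_sum (A := fun k w => w.2 k * Nc G i k w) v (fun k _ =>
    (((ycoord_contDiff k).differentiable (by simp)).differentiableAt).mul
      (diffN hU hG i k hz))] at h1
  rw [pdv_const_mul v 2 (diffAt_of_cd hU (hG.1 i) hz)] at h1
  rw [← h1]
  refine Finset.sum_congr rfl fun k _ => ?_
  rw [pdv_mul v (((ycoord_contDiff k).differentiable (by simp)).differentiableAt)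
    (diffN hU hG i k hz), pdv_ycoord]
  ring

lemma eulerN_x (hU : IsOpen U) (hG : IsSpray U G) (i j : Fin n) {z : E n}
    (hz : z ∈ Dom U) :
    ∑ k, z.2 k * pdx j (Nc G i k) z = 2 * pdx j (G i) z := by
  have h := contract_deriv hU hG i hz ((Pi.single j 1, 0) : E n)
  simpa [pdx] using h

lemma eulerN_y (hU : IsOpen U) (hG : IsSpray U G) (i m : Fin n) {z : E n}
    (hz : z ∈ Dom U) :
    ∑ k, z.2 k * pdy m (Nc G i k) z = Nc G i m z := by
  have h := contract_deriv hU hG i hz ((0, Pi.single m 1) : E n)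
  rw [Finset.sum_add_distrib] at h
  have h2 : ∑ k, ((0, Pi.single m 1) : E n).2 k * Nc G i k z = Nc G i m z := by
    simp [Pi.single_apply, ite_mul]
  rw [h2] at h
  have h3 : (2 : ℝ) * fderiv ℝ (G i) z ((0, Pi.single m 1) : E n) = 2 * Nc G i m z := rfl
  rw [h3] at h
  have h' : Nc G i m z + ∑ x, z.2 x * pdy m (Nc G i x) z = 2 * Nc G i m z := h
  linarith [h']

/-- identity (A): `RJac i j = yᵏ Rcurv i k j` -/
lemma jac_eq_contract (hU : IsOpen U) (hG : IsSpray U G) (i j : Fin n) {z : E n}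
    (hz : z ∈ Dom U) :
    RJac G i j z = ∑ k, z.2 k * Rcurv G i k j z := by
  have hpdyG : ∀ k : Fin n, pdy k (G i) z = Nc G i k z := fun _ => rfl
  have h1 := eulerN_x hU hG i j hz
  have h2 : ∑ k, z.2 k * ∑ m, Nc G m j z * pdy m (Nc G i k) z
      = ∑ m, Nc G m j z * Nc G i m z := by
    have e1 : ∀ k : Fin n, z.2 k * ∑ m, Nc G m j z * pdy m (Nc G i k) z
        = ∑ m, Nc G m j z * (z.2 k * pdy m (Nc G i k) z) := by
      intro k; rw [Finset.mul_sum]; exact Finset.sum_congr rfl fun m _ => by ring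
    calc ∑ k, z.2 k * ∑ m, Nc G m j z * pdy m (Nc G i k) z
        = ∑ k, ∑ m, Nc G m j z * (z.2 k * pdy m (Nc G i k) z) := by
          exact Finset.sum_congr rfl fun k _ => e1 k
      _ = ∑ m, ∑ k, Nc G m j z * (z.2 k * pdy m (Nc G i k) z) := Finset.sum_comm
      _ = ∑ m, Nc G m j z * ∑ k, z.2 k * pdy m (Nc G i k) z := by
          exact Finset.sum_congr rfl fun m _ => by rw [Finset.mul_sum]
      _ = ∑ m, Nc G m j z * Nc G i m z := by
          exact Finset.sum_congr rfl fun m _ => by rw [eulerN_y hU hG i m hz]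
  have h3 : ∑ k, z.2 k * ∑ m, Nc G m k z * pdy m (Nc G i j) z
      = ∑ m, 2 * G m z * pdy m (Nc G i j) z := by
    calc ∑ k, z.2 k * ∑ m, Nc G m k z * pdy m (Nc G i j) z
        = ∑ k, ∑ m, (z.2 k * Nc G m k z) * pdy m (Nc G i j) z := by
          refine Finset.sum_congr rfl fun k _ => ?_
          rw [Finset.mul_sum]; exact Finset.sum_congr rfl fun m _ => by ring
      _ = ∑ m, ∑ k, (z.2 k * Nc G m k z) * pdy m (Nc G i j) z := Finset.sum_comm
      _ = ∑ m, (∑ k, z.2 k * Nc G m k z) * pdy m (Nc G i j) z := by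
          refine Finset.sum_congr rfl fun m _ => ?_
          rw [Finset.sum_mul]
      _ = ∑ m, 2 * G m z * pdy m (Nc G i j) z := by
          exact Finset.sum_congr rfl fun m _ => by rw [eulerG hU hG m hz]
  simp only [RJac, Sder, Rcurv, delx, hpdyG]
  have hrhs : ∑ k, z.2 k *
        ((pdx j (Nc G i k) z - ∑ m, Nc G m j z * pdy m (Nc G i k) z)
          - (pdx k (Nc G i j) z - ∑ m, Nc G m k z * pdy m (Nc G i j) z))
      = (∑ k, z.2 k * pdx j (Nc G i k) z)
        - (∑ k, z.2 k * ∑ m, Nc G m j z * pdy m (Nc G i k) z)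
        - (∑ k, z.2 k * pdx k (Nc G i j) z)
        + (∑ k, z.2 k * ∑ m, Nc G m k z * pdy m (Nc G i j) z) := by
    rw [← Finset.sum_sub_distrib, ← Finset.sum_sub_distrib, ← Finset.sum_add_distrib]
    exact Finset.sum_congr rfl fun k _ => by ring
  rw [hrhs, h1, h2, h3]
  have hc1 : ∑ m, Nc G m j z * Nc G i m z = ∑ k, Nc G k j z * Nc G i k z := rfl
  have hc2 : ∑ m, 2 * G m z * pdy m (Nc G i j) z
      = 2 * ∑ k, G k z * pdy k (Nc G i j) z := by
    rw [Finset.mul_sum]; exact Finset.sum_congr rfl fun k _ => by ring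
  have hc3 : ∑ k, Nc G i k z * Nc G k j z = ∑ k, Nc G k j z * Nc G i k z :=
    Finset.sum_congr rfl fun k _ => by ring
  rw [hc1, hc2, hc3]
  ring

end Spray
section Curv
variable {n : ℕ} {U : Set (Fin n → ℝ)} {G : Fin n → E n → ℝ}

lemma cd_pdxN (hU : IsOpen U) (hG : IsSpray U G) (a i j : Fin n) :
    ContDiffOn ℝ (⊤ : ℕ∞) (pdx a (Nc G i j)) (Dom U) :=
  cd_pdv hU (cdN hU hG i j) ((Pi.single a 1, 0) : E n)

lemma cd_pdyN (hU : IsOpen U) (hG : IsSpray U G) (a i j : Fin n) :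
    ContDiffOn ℝ (⊤ : ℕ∞) (pdy a (Nc G i j)) (Dom U) :=
  cd_pdv hU (cdN hU hG i j) ((0, Pi.single a 1) : E n)

lemma cd_NSum (hU : IsOpen U) (hG : IsSpray U G) (a i j : Fin n) :
    ContDiffOn ℝ (⊤ : ℕ∞) (fun w => ∑ m, Nc G m a w * pdy m (Nc G i j) w) (Dom U) :=
  ContDiffOn.sum fun m _ => (cdN hU hG m a).mul (cd_pdyN hU hG m i j)

lemma cdRcurv (hU : IsOpen U) (hG : IsSpray U G) (i j k : Fin n) :
    ContDiffOn ℝ (⊤ : ℕ∞) (Rcurv G i j k) (Dom U) :=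
  ((cd_pdxN hU hG k i j).sub (cd_NSum hU hG k i j)).sub
    ((cd_pdxN hU hG j i k).sub (cd_NSum hU hG j i k))

lemma diffRcurv (hU : IsOpen U) (hG : IsSpray U G) (i j k : Fin n) {z : E n}
    (hz : z ∈ Dom U) : DifferentiableAt ℝ (Rcurv G i j k) z :=
  diffAt_of_cd hU (cdRcurv hU hG i j k) hz

lemma homogRcurv (hU : IsOpen U) (hG : IsSpray U G) (i j k : Fin n) :
    Homog U 1 (Rcurv G i j k) := by
  intro z hz L hL
  have hx1 := homog_pdx hU (cdN hU hG i j) (homogN hU hG i j) k z hz L hL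
  have hx2 := homog_pdx hU (cdN hU hG i k) (homogN hU hG i k) j z hz L hL
  have hs : ∀ (a : Fin n) (b c : Fin n),
      ∑ m, Nc G m a (z.1, L • z.2) * pdy m (Nc G b c) (z.1, L • z.2)
        = L * ∑ m, Nc G m a z * pdy m (Nc G b c) z := by
    intro a b c
    rw [Finset.mul_sum]
    refine Finset.sum_congr rfl fun m _ => ?_
    rw [homogN hU hG m a z hz L hL,
      homog_pdy (p := 0) hU (cdN hU hG b c) (homogN hU hG b c) m z hz L hL]
    ring
  show (pdx k (Nc G i j) (z.1, L • z.2)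
      - ∑ m, Nc G m k (z.1, L • z.2) * pdy m (Nc G i j) (z.1, L • z.2))
      - (pdx j (Nc G i k) (z.1, L • z.2)
      - ∑ m, Nc G m j (z.1, L • z.2) * pdy m (Nc G i k) (z.1, L • z.2))
      = L ^ 1 * Rcurv G i j k z
  rw [hx1, hx2, hs k i j, hs j i k]
  show _ = L ^ 1 * ((pdx k (Nc G i j) z - ∑ m, Nc G m k z * pdy m (Nc G i j) z)
      - (pdx j (Nc G i k) z - ∑ m, Nc G m j z * pdy m (Nc G i k) z))
  ring

lemma eulerR (hU : IsOpen U) (hG : IsSpray U G) (i j k : Fin n) {z : E n}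
    (hz : z ∈ Dom U) :
    ∑ l, z.2 l * pdy l (Rcurv G i j k) z = Rcurv G i j k z := by
  have h := euler hU (homogRcurv hU hG i j k) hz (diffRcurv hU hG i j k hz)
  norm_num at h
  exact h

-- symmetry lemmas
lemma cAtG (hU : IsOpen U) (hG : IsSpray U G) (i : Fin n) {z : E n} (hz : z ∈ Dom U) :
    ContDiffAt ℝ (⊤ : ℕ∞) (G i) z :=
  (hG.1 i).contDiffAt (mem_nhds_Dom hU hz)

lemma cAtN (hU : IsOpen U) (hG : IsSpray U G) (i j : Fin n) {z : E n} (hz : z ∈ Dom U) :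
    ContDiffAt ℝ (⊤ : ℕ∞) (Nc G i j) z :=
  (cdN hU hG i j).contDiffAt (mem_nhds_Dom hU hz)

lemma symB (hU : IsOpen U) (hG : IsSpray U G) (m l k : Fin n) {z : E n} (hz : z ∈ Dom U) :
    pdy l (Nc G m k) z = pdy k (Nc G m l) z :=
  pdv_swap (cAtG hU hG m hz) ((0, Pi.single k 1) : E n) ((0, Pi.single l 1) : E n)

lemma symA (hU : IsOpen U) (hG : IsSpray U G) (i a b c : Fin n) {z : E n} (hz : z ∈ Dom U) :
    pdy a (pdx b (Nc G i c)) z = pdy c (pdx b (Nc G i a)) z := by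
  have s1 : pdy a (pdx b (Nc G i c)) z = pdx b (pdy a (Nc G i c)) z :=
    pdv_swap (cAtN hU hG i c hz) ((Pi.single b 1, 0) : E n) ((0, Pi.single a 1) : E n)
  have s2 : pdx b (pdy a (Nc G i c)) z = pdx b (pdy c (Nc G i a)) z := by
    refine pdv_congr _ (Filter.eventuallyEq_of_mem (mem_nhds_Dom hU hz) fun w hw => ?_)
    exact symB hU hG i a c hw
  have s3 : pdx b (pdy c (Nc G i a)) z = pdy c (pdx b (Nc G i a)) z :=
    pdv_swap (cAtN hU hG i a hz) ((0, Pi.single c 1) : E n) ((Pi.single b 1, 0) : E n)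
  rw [s1, s2, s3]

lemma symC (hU : IsOpen U) (hG : IsSpray U G) (i a m c : Fin n) {z : E n} (hz : z ∈ Dom U) :
    pdy a (pdy m (Nc G i c)) z = pdy c (pdy m (Nc G i a)) z := by
  have s1 : pdy a (pdy m (Nc G i c)) z = pdy m (pdy a (Nc G i c)) z :=
    pdv_swap (cAtN hU hG i c hz) ((0, Pi.single m 1) : E n) ((0, Pi.single a 1) : E n)
  have s2 : pdy m (pdy a (Nc G i c)) z = pdy m (pdy c (Nc G i a)) z := by
    refine pdv_congr _ (Filter.eventuallyEq_of_mem (mem_nhds_Dom hU hz) fun w hw => ?_)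
    exact symB hU hG i a c hw
  have s3 : pdy m (pdy c (Nc G i a)) z = pdy c (pdy m (Nc G i a)) z :=
    pdv_swap (cAtN hU hG i a hz) ((0, Pi.single c 1) : E n) ((0, Pi.single m 1) : E n)
  rw [s1, s2, s3]

end Curv
section Cyclic
variable {n : ℕ} {U : Set (Fin n → ℝ)} {G : Fin n → E n → ℝ}

lemma diff_pdxN (hU : IsOpen U) (hG : IsSpray U G) (a i j : Fin n) {z : E n}
    (hz : z ∈ Dom U) : DifferentiableAt ℝ (pdx a (Nc G i j)) z :=
  diffAt_of_cd hU (cd_pdxN hU hG a i j) hz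

lemma diff_pdyN (hU : IsOpen U) (hG : IsSpray U G) (a i j : Fin n) {z : E n}
    (hz : z ∈ Dom U) : DifferentiableAt ℝ (pdy a (Nc G i j)) z :=
  diffAt_of_cd hU (cd_pdyN hU hG a i j) hz

lemma diff_NSum (hU : IsOpen U) (hG : IsSpray U G) (a i j : Fin n) {z : E n}
    (hz : z ∈ Dom U) :
    DifferentiableAt ℝ (fun w => ∑ m, Nc G m a w * pdy m (Nc G i j) w) z :=
  diffAt_of_cd hU (cd_NSum hU hG a i j) hz

/-- expansion of `∂̇ₗ Rⁱⱼₖ` -/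
lemma pdy_Rcurv (hU : IsOpen U) (hG : IsSpray U G) (l i j k : Fin n) {z : E n}
    (hz : z ∈ Dom U) :
    pdy l (Rcurv G i j k) z =
      (pdy l (pdx k (Nc G i j)) z
        - (∑ m, Nc G m k z * pdy l (pdy m (Nc G i j)) z
           + ∑ m, pdy m (Nc G i j) z * pdy l (Nc G m k) z))
      - (pdy l (pdx j (Nc G i k)) z
        - (∑ m, Nc G m j z * pdy l (pdy m (Nc G i k)) z
           + ∑ m, pdy m (Nc G i k) z * pdy l (Nc G m j) z)) := by
  set v : E n := ((0, Pi.single l 1) : E n) with hv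
  have h0 : pdy l (Rcurv G i j k) z =
      fderiv ℝ (fun w => (pdx k (Nc G i j) w - ∑ m, Nc G m k w * pdy m (Nc G i j) w)
        - (pdx j (Nc G i k) w - ∑ m, Nc G m j w * pdy m (Nc G i k) w)) z v := rfl
  have hS : ∀ a b c : Fin n,
      fderiv ℝ (fun w => ∑ m, Nc G m a w * pdy m (Nc G b c) w) z v
        = ∑ m, Nc G m a z * pdy l (pdy m (Nc G b c)) z
          + ∑ m, pdy m (Nc G b c) z * pdy l (Nc G m a) z := by
    intro a b c
    rw [pdv_sum (A := fun m w => Nc G m a w * pdy m (Nc G b c) w) v (fun m _ => (diffN hU hG m a hz).mul (diff_pdyN hU hG m b c hz))]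
    rw [← Finset.sum_add_distrib]
    refine Finset.sum_congr rfl fun m _ => ?_
    rw [pdv_mul v (diffN hU hG m a hz) (diff_pdyN hU hG m b c hz)]
    have e1 : (fderiv ℝ (pdy m (Nc G b c)) z) v = pdy l (pdy m (Nc G b c)) z := rfl
    have e2 : (fderiv ℝ (Nc G m a) z) v = pdy l (Nc G m a) z := rfl
    rw [e1, e2]
  rw [h0, pdv_sub (f := fun w => pdx k (Nc G i j) w - ∑ m, Nc G m k w * pdy m (Nc G i j) w)
      (g := fun w => pdx j (Nc G i k) w - ∑ m, Nc G m j w * pdy m (Nc G i k) w) v ((diff_pdxN hU hG k i j hz).sub (diff_NSum hU hG k i j hz))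
      ((diff_pdxN hU hG j i k hz).sub (diff_NSum hU hG j i k hz)),
    pdv_sub v (diff_pdxN hU hG k i j hz) (diff_NSum hU hG k i j hz),
    pdv_sub v (diff_pdxN hU hG j i k hz) (diff_NSum hU hG j i k hz),
    hS k i j, hS j i k]
  have e3 : (fderiv ℝ (pdx k (Nc G i j)) z) v = pdy l (pdx k (Nc G i j)) z := rfl
  have e4 : (fderiv ℝ (pdx j (Nc G i k)) z) v = pdy l (pdx j (Nc G i k)) z := rfl
  rw [e3, e4]

/-- cyclic identity `∂̇ₗRⁱⱼₖ + ∂̇ⱼRⁱₖₗ + ∂̇ₖRⁱₗⱼ = 0` -/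
lemma cyclicR (hU : IsOpen U) (hG : IsSpray U G) (i j k l : Fin n) {z : E n}
    (hz : z ∈ Dom U) :
    pdy l (Rcurv G i j k) z + pdy j (Rcurv G i k l) z + pdy k (Rcurv G i l j) z = 0 := by
  rw [pdy_Rcurv hU hG l i j k hz, pdy_Rcurv hU hG j i k l hz, pdy_Rcurv hU hG k i l j hz]
  have a1 : pdy l (pdx k (Nc G i j)) z = pdy j (pdx k (Nc G i l)) z :=
    symA hU hG i l k j hz
  have a2 : pdy j (pdx l (Nc G i k)) z = pdy k (pdx l (Nc G i j)) z :=
    symA hU hG i j l k hz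
  have a3 : pdy k (pdx j (Nc G i l)) z = pdy l (pdx j (Nc G i k)) z :=
    symA hU hG i k j l hz
  have s1 : ∑ m, pdy m (Nc G i j) z * pdy l (Nc G m k) z
      = ∑ m, pdy m (Nc G i j) z * pdy k (Nc G m l) z :=
    Finset.sum_congr rfl fun m _ => by rw [symB hU hG m l k hz]
  have s2 : ∑ m, pdy m (Nc G i k) z * pdy l (Nc G m j) z
      = ∑ m, pdy m (Nc G i k) z * pdy j (Nc G m l) z :=
    Finset.sum_congr rfl fun m _ => by rw [symB hU hG m l j hz]
  have s3 : ∑ m, pdy m (Nc G i l) z * pdy j (Nc G m k) z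
      = ∑ m, pdy m (Nc G i l) z * pdy k (Nc G m j) z :=
    Finset.sum_congr rfl fun m _ => by rw [symB hU hG m j k hz]
  have c1 : ∑ m, Nc G m k z * pdy l (pdy m (Nc G i j)) z
      = ∑ m, Nc G m k z * pdy j (pdy m (Nc G i l)) z :=
    Finset.sum_congr rfl fun m _ => by rw [symC hU hG i l m j hz]
  have c2 : ∑ m, Nc G m j z * pdy l (pdy m (Nc G i k)) z
      = ∑ m, Nc G m j z * pdy k (pdy m (Nc G i l)) z :=
    Finset.sum_congr rfl fun m _ => by rw [symC hU hG i l m k hz]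
  have c3 : ∑ m, Nc G m l z * pdy j (pdy m (Nc G i k)) z
      = ∑ m, Nc G m l z * pdy k (pdy m (Nc G i j)) z :=
    Finset.sum_congr rfl fun m _ => by rw [symC hU hG i j m k hz]
  rw [a1, a2, a3, s1, s2, s3, c1, c2, c3]
  ring

lemma Rcurv_antisym (i a b : Fin n) (z : E n) :
    Rcurv G i a b z = - Rcurv G i b a z := by
  simp only [Rcurv]; ring

lemma pdy_Rcurv_antisym (c i a b : Fin n) (z : E n) :
    pdy c (Rcurv G i a b) z = - pdy c (Rcurv G i b a) z := by
  have h : Rcurv G i a b = fun w => - Rcurv G i b a w :=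
    funext fun w => Rcurv_antisym i a b w
  show fderiv ℝ (Rcurv G i a b) z _ = _
  rw [h, fderiv_fun_neg]
  rfl

lemma pdy_contract (hU : IsOpen U) {R' : Fin n → E n → ℝ}
    (hR' : ∀ l, ContDiffOn ℝ (⊤ : ℕ∞) (R' l) (Dom U)) {z : E n} (hz : z ∈ Dom U) (j : Fin n) :
    pdy j (fun w => ∑ l, w.2 l * R' l w) z = R' j z + ∑ l, z.2 l * pdy j (R' l) z := by
  set v : E n := ((0, Pi.single j 1) : E n) with hv
  have h0 : pdy j (fun w => ∑ l, w.2 l * R' l w) z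
      = fderiv ℝ (fun w => ∑ l, w.2 l * R' l w) z v := rfl
  rw [h0, pdv_sum (A := fun l w => w.2 l * R' l w) v (fun l _ =>
    (((ycoord_contDiff l).differentiable (by simp)).differentiableAt).mul
      (diffAt_of_cd hU (hR' l) hz))]
  have h1 : ∀ l : Fin n, fderiv ℝ (fun w => w.2 l * R' l w) z v
      = v.2 l * R' l z + z.2 l * pdy j (R' l) z := by
    intro l
    rw [pdv_mul v (((ycoord_contDiff l).differentiable (by simp)).differentiableAt)
      (diffAt_of_cd hU (hR' l) hz), pdv_ycoord]
    have e : (fderiv ℝ (R' l) z) v = pdy j (R' l) z := rfl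
    rw [e]; ring
  rw [Finset.sum_congr rfl fun l _ => h1 l, Finset.sum_add_distrib]
  have h2 : ∑ l, v.2 l * R' l z = R' j z := by
    simp [hv, Pi.single_apply, ite_mul]
  rw [h2]

/-- master identity: `∂̇ⱼΦⁱₖ − ∂̇ₖΦⁱⱼ = 3 Rⁱⱼₖ` -/
lemma master (hU : IsOpen U) (hG : IsSpray U G) (i j k : Fin n) {z : E n}
    (hz : z ∈ Dom U) :
    pdy j (RJac G i k) z - pdy k (RJac G i j) z = 3 * Rcurv G i j k z := by
  have hevk : RJac G i k =ᶠ[nhds z] fun w => ∑ l, w.2 l * Rcurv G i l k w :=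
    Filter.eventuallyEq_of_mem (mem_nhds_Dom hU hz) fun w hw => jac_eq_contract hU hG i k hw
  have hevj : RJac G i j =ᶠ[nhds z] fun w => ∑ l, w.2 l * Rcurv G i l j w :=
    Filter.eventuallyEq_of_mem (mem_nhds_Dom hU hz) fun w hw => jac_eq_contract hU hG i j hw
  have hAj : pdy j (RJac G i k) z
      = Rcurv G i j k z + ∑ l, z.2 l * pdy j (Rcurv G i l k) z := by
    have := pdv_congr ((0, Pi.single j 1) : E n) hevk
    rw [show pdy j (RJac G i k) z = fderiv ℝ (RJac G i k) z ((0, Pi.single j 1) : E n) from rfl,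
      this]
    exact pdy_contract hU (fun l => cdRcurv hU hG i l k) hz j
  have hAk : pdy k (RJac G i j) z
      = Rcurv G i k j z + ∑ l, z.2 l * pdy k (Rcurv G i l j) z := by
    have := pdv_congr ((0, Pi.single k 1) : E n) hevj
    rw [show pdy k (RJac G i j) z = fderiv ℝ (RJac G i j) z ((0, Pi.single k 1) : E n) from rfl,
      this]
    exact pdy_contract hU (fun l => cdRcurv hU hG i l j) hz k
  have hcyc : ∀ l : Fin n, pdy j (Rcurv G i l k) z
      = pdy k (Rcurv G i l j) z + pdy l (Rcurv G i j k) z := by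
    intro l
    have h := cyclicR hU hG i l k j hz
    -- pdy j (R i l k) + pdy l (R i k j) + pdy k (R i j l) = 0
    have e1 : pdy l (Rcurv G i k j) z = - pdy l (Rcurv G i j k) z :=
      pdy_Rcurv_antisym l i k j z
    have e2 : pdy k (Rcurv G i j l) z = - pdy k (Rcurv G i l j) z :=
      pdy_Rcurv_antisym k i j l z
    rw [e1, e2] at h
    linarith
  have hsum : ∑ l, z.2 l * pdy j (Rcurv G i l k) z
      = (∑ l, z.2 l * pdy k (Rcurv G i l j) z) + ∑ l, z.2 l * pdy l (Rcurv G i j k) z := by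
    rw [← Finset.sum_add_distrib]
    exact Finset.sum_congr rfl fun l _ => by rw [hcyc l]; ring
  rw [hAj, hAk, hsum, eulerR hU hG i j k hz, Rcurv_antisym i k j z]
  ring

end Cyclic

/-- A spray is isotropic (its Jacobi endomorphism has the form
`Φ = λJ + η⊗C`, i.e. `Rⁱⱼ = λ δⁱⱼ + ηⱼ yⁱ`) if and only if its curvature
tensor has the isotropic form `R = α∧J + β⊗C`, i.e.
`Rⁱⱼₖ = αⱼ δⁱₖ − αₖ δⁱⱼ + βⱼₖ yⁱ`. -/
theorem isotropic_iff_curvature_isotropic {n : ℕ}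
    (U : Set (Fin n → ℝ)) (hU : IsOpen U)
    (G : Fin n → E n → ℝ) (hG : IsSpray U G) :
    (∃ (lam : E n → ℝ) (η : Fin n → E n → ℝ),
      ContDiffOn ℝ (⊤ : ℕ∞) lam (Dom U) ∧ (∀ j, ContDiffOn ℝ (⊤ : ℕ∞) (η j) (Dom U)) ∧
      ∀ z ∈ Dom U, ∀ i j,
        RJac G i j z = lam z * (if i = j then (1:ℝ) else 0) + η j z * z.2 i)
    ↔
    (∃ (α : Fin n → E n → ℝ) (β : Fin n → Fin n → E n → ℝ),
      (∀ j, ContDiffOn ℝ (⊤ : ℕ∞) (α j) (Dom U)) ∧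
      (∀ j k, ContDiffOn ℝ (⊤ : ℕ∞) (β j k) (Dom U)) ∧
      (∀ j k, ∀ z ∈ Dom U, β j k z = - β k j z) ∧
      ∀ z ∈ Dom U, ∀ i j k,
        Rcurv G i j k z
          = α j z * (if i = k then (1:ℝ) else 0)
            - α k z * (if i = j then (1:ℝ) else 0) + β j k z * z.2 i) := by
  constructor
  · rintro ⟨lam, η, hlam, hη, hiso⟩
    refine ⟨fun j z => (1/3 : ℝ) * (pdy j lam z - η j z),
      fun j k z => (1/3 : ℝ) * (pdy j (η k) z - pdy k (η j) z), ?_, ?_, ?_, ?_⟩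
    · intro j
      exact ((cd_pdv hU hlam ((0, Pi.single j 1) : E n)).sub (hη j)).const_smul (1/3 : ℝ)
    · intro j k
      exact ((cd_pdv hU (hη k) ((0, Pi.single j 1) : E n)).sub
        (cd_pdv hU (hη j) ((0, Pi.single k 1) : E n))).const_smul (1/3 : ℝ)
    · intro j k z _; ring
    · intro z hz i j k
      have hm := master hU hG i j k hz
      -- compute pdy a (RJac G i b) z from the isotropic form
      have key : ∀ a b : Fin n, pdy a (RJac G i b) z
          = (if i = b then (1:ℝ) else 0) * pdy a lam z
            + (η b z * (if i = a then (1:ℝ) else 0) + z.2 i * pdy a (η b) z) := by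
        intro a b
        have hev : RJac G i b =ᶠ[nhds z]
            fun w => lam w * (if i = b then (1:ℝ) else 0) + η b w * w.2 i :=
          Filter.eventuallyEq_of_mem (mem_nhds_Dom hU hz) fun w hw => hiso w hw i b
        set v : E n := ((0, Pi.single a 1) : E n) with hv
        have h0 : pdy a (RJac G i b) z = fderiv ℝ (RJac G i b) z v := rfl
        rw [h0, pdv_congr v hev]
        have dlam : DifferentiableAt ℝ lam z := diffAt_of_cd hU hlam hz
        have dη : DifferentiableAt ℝ (η b) z := diffAt_of_cd hU (hη b) hz
        have dyc : DifferentiableAt ℝ (fun w : E n => w.2 i) z :=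
          ((ycoord_contDiff i).differentiable (by simp)).differentiableAt
        have d1 : DifferentiableAt ℝ (fun w => lam w * (if i = b then (1:ℝ) else 0)) z :=
          dlam.mul_const _
        have d2 : DifferentiableAt ℝ (fun w => η b w * w.2 i) z := dη.mul dyc
        rw [pdv_add v d1 d2, pdv_mul v dη dyc, pdv_ycoord]
        have h3 : fderiv ℝ (fun w => lam w * (if i = b then (1:ℝ) else 0)) z v
            = (if i = b then (1:ℝ) else 0) * pdy a lam z := by
          rw [show (fun w => lam w * (if i = b then (1:ℝ) else 0))
              = (fun w => (if i = b then (1:ℝ) else 0) * lam w) from funext fun w => by ring,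
            pdv_const_mul v _ dlam]
          rfl
        rw [h3]
        have h4 : v.2 i = (if i = a then (1:ℝ) else 0) := by
          simp [hv, Pi.single_apply]
        rw [h4]
        ring_nf
        rfl
      rw [key j k, key k j] at hm
      linarith [hm]
  · rintro ⟨α, β, hα, hβ, hanti, hiso⟩
    refine ⟨fun z => ∑ k, z.2 k * α k z,
      fun j z => (∑ k, z.2 k * β k j z) - α j z, ?_, ?_, ?_⟩
    · exact ContDiffOn.sum fun k _ =>
        ((ycoord_contDiff k).contDiffOn).mul (hα k)
    · intro j
      exact (ContDiffOn.sum fun k _ =>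
        ((ycoord_contDiff k).contDiffOn).mul (hβ k j)).sub (hα j)
    · intro z hz i j
      rw [jac_eq_contract hU hG i j hz]
      have h1 : ∀ k : Fin n, z.2 k * Rcurv G i k j z
          = z.2 k * α k z * (if i = j then (1:ℝ) else 0)
            - z.2 k * (α j z * (if i = k then (1:ℝ) else 0))
            + z.2 k * β k j z * z.2 i := by
        intro k
        rw [hiso z hz i k j]
        ring
      rw [Finset.sum_congr rfl fun k _ => h1 k]
      rw [Finset.sum_add_distrib, Finset.sum_sub_distrib, ← Finset.sum_mul, ← Finset.sum_mul]
      have h2 : ∑ k, z.2 k * (α j z * (if i = k then (1:ℝ) else 0)) = z.2 i * α j z := by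
        simp [mul_ite, Finset.sum_ite_eq]
      rw [h2]
      ring

end PM
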